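/- There is an absolute constant C > 0 with the following property. Let f, g, h : Ω → ℝ be C¹ functions such that f, ∂₂f, g, ∂₂g, h, ∂₁h are square integrable on Ω and h has zero horizontal average, i.e. ∫_T h(x,y) dx = 0 for every y ∈ ℝ. Then ∫_Ω |f(x,y) g(x,y) h(x,y)| dx dy ≤ C ‖f‖_{L²(Ω)}^{1/2} ‖∂₂f‖_{L²(Ω)}^{1/2} ‖g‖_{L²(Ω)} ( ‖h‖_{L²(Ω)}^{1/2} ‖∂₁h‖_{L²(Ω)}^{1/2} ), obtained by combining the anisotropic Hölder inequality ∫_Ω |fgh| ≤ ‖f‖_{L∞_y L²_x} ‖g‖_{L²(Ω)} ‖h‖_{L∞_x L²_y} with the one-dimensional interpolation inequalities in each variable. -/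

import Mathlib

open MeasureTheory Filter

noncomputable section

/-- The spatial domain `Ω = 𝕋 × ℝ` realized as the fundamental domain `(0,1] × ℝ`;
functions on `Ω` are identified with functions on `ℝ × ℝ` that are `1`-periodic
in the first (horizontal) variable. -/
def OmegaStrip : Set (ℝ × ℝ) := Set.Ioc (0:ℝ) 1 ×ˢ (Set.univ : Set ℝ)

/-- `1`-periodicity in the horizontal variable. -/
def PeriodicX (f : ℝ × ℝ → ℝ) : Prop := ∀ x y : ℝ, f (x + 1, y) = f (x, y)

/-- Horizontal partial derivative `∂₁`. -/
def d1 (f : ℝ × ℝ → ℝ) : ℝ × ℝ → ℝ := fun p => deriv (fun x => f (x, p.2)) p.1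

/-- Vertical partial derivative `∂₂`. -/
def d2 (f : ℝ × ℝ → ℝ) : ℝ × ℝ → ℝ := fun p => deriv (fun y => f (p.1, y)) p.2

/-- Squared `L²(Ω)` norm. -/
def sqL2 (f : ℝ × ℝ → ℝ) : ℝ := ∫ p in OmegaStrip, (f p) ^ 2

/-- `L²(Ω)` norm. -/
def l2norm (f : ℝ × ℝ → ℝ) : ℝ := Real.sqrt (sqL2 f)

/-- Square integrability on `Ω`. -/
def SqInt (f : ℝ × ℝ → ℝ) : Prop := IntegrableOn (fun p => (f p) ^ 2) OmegaStrip

/-- Horizontal average `f̄(y) = ∫_𝕋 f(x,y) dx`. -/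
def avgX (f : ℝ × ℝ → ℝ) (y : ℝ) : ℝ := ∫ x in (0:ℝ)..1, f (x, y)

/-- Oscillation part `f̃ = f − f̄`. -/
def oscX (f : ℝ × ℝ → ℝ) : ℝ × ℝ → ℝ := fun p => f p - avgX f p.2

/-- `L²(𝕋)` norm of the horizontal slice at height `y`. -/
def sliceL2x (f : ℝ × ℝ → ℝ) (y : ℝ) : ℝ := Real.sqrt (∫ x in (0:ℝ)..1, (f (x, y)) ^ 2)

/-! For fixed `y`, the slice `h(·, y)` has mean zero, hence a zero in `[0, 1]`, and the
fundamental theorem of calculus applied to `h²` gives `h(x, y)² ≤ 2 ∫_𝕋 |h ∂₁h|(·, y)`.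
For almost every `x`, the function `f(x, ·)²` and its derivative `2 f ∂₂f` are integrable on `ℝ`,
so it vanishes at `+∞`; integrating its derivative from `y` to `+∞` and then over `x` gives
`∫_𝕋 f(·, y)² ≤ 2 ∫_Ω |f ∂₂f|` for every `y`. Bounding `|h|` by its supremum on each
horizontal line and applying Cauchy–Schwarz first in `x` and then in `y` yields
`∫_Ω |fgh| ≤ √(2 ∫_Ω |f ∂₂f|) ‖g‖ √(2 ∫_Ω |h ∂₁h|)`, and a last Cauchy–Schwarz inequality
gives the claim with `C = 2`. -/

open Set

section CauchySchwarz

variable {α : Type*} [MeasurableSpace α] {μ : Measure α}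

theorem integral_abs_mul_le_sqrt_mul_sqrt {f g : α → ℝ} (hf : MemLp f 2 μ) (hg : MemLp g 2 μ) :
    ∫ a, |f a * g a| ∂μ ≤ √(∫ a, f a ^ 2 ∂μ) * √(∫ a, g a ^ 2 ∂μ) := by
  have h := integral_mul_norm_le_Lp_mul_Lq Real.HolderConjugate.two_two
    (by simpa using hf) (by simpa using hg)
  simpa [abs_mul, Real.sqrt_eq_rpow, sq_abs] using h

theorem memLp_two_sqrt {F : α → ℝ} (hF : Integrable F μ) (hF0 : 0 ≤ F) :
    MemLp (fun a => √(F a)) 2 μ :=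
  (memLp_two_iff_integrable_sq
    (Real.continuous_sqrt.comp_aestronglyMeasurable hF.aestronglyMeasurable)).2 <|
    hF.congr <| .of_forall fun a => (Real.sq_sqrt (hF0 a)).symm

theorem integral_sqrt_mul_sqrt_le {F G : α → ℝ} (hF : Integrable F μ) (hG : Integrable G μ)
    (hF0 : 0 ≤ F) (hG0 : 0 ≤ G) :
    ∫ a, √(F a) * √(G a) ∂μ ≤ √(∫ a, F a ∂μ) * √(∫ a, G a ∂μ) := by
  have h := integral_abs_mul_le_sqrt_mul_sqrt (memLp_two_sqrt hF hF0) (memLp_two_sqrt hG hG0)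
  have hsq : ∀ H : α → ℝ, 0 ≤ H → ∫ a, √(H a) ^ 2 ∂μ = ∫ a, H a ∂μ := fun H hH0 =>
    integral_congr_ae (.of_forall fun a => Real.sq_sqrt (hH0 a))
  rw [hsq F hF0, hsq G hG0] at h
  simpa only [abs_of_nonneg (mul_nonneg (Real.sqrt_nonneg _) (Real.sqrt_nonneg _))] using h

end CauchySchwarz

theorem sq_le_two_mul_integral_abs_mul_deriv {u u' : ℝ → ℝ} (hu : ∀ t, HasDerivAt u (u' t) t)
    (hu2 : Integrable (fun t => u t ^ 2)) (huu' : Integrable (fun t => u t * u' t)) (y : ℝ) :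
    u y ^ 2 ≤ 2 * ∫ t, |u t * u' t| := by
  have hderiv : ∀ t, HasDerivAt (fun s => u s ^ 2) (2 * (u t * u' t)) t := fun t =>
    ((hu t).fun_pow 2).congr_deriv (by ring)
  have hint := huu'.const_mul 2
  have hlim : Tendsto (fun s => u s ^ 2) atTop (nhds 0) :=
    tendsto_zero_of_hasDerivAt_of_integrableOn_Ioi (a := y) (fun t _ => hderiv t)
      hint.integrableOn hu2.integrableOn
  have hFTC := integral_Ioi_of_hasDerivAt_of_tendsto' (a := y) (fun t _ => hderiv t)
    hint.integrableOn hlim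
  calc u y ^ 2 = -∫ t in Ioi y, 2 * (u t * u' t) := by rw [hFTC]; ring
    _ ≤ ∫ t in Ioi y, |2 * (u t * u' t)| := by
        rw [← integral_neg]
        exact integral_mono hint.integrableOn.neg hint.abs.integrableOn fun t => neg_le_abs _
    _ ≤ ∫ t, |2 * (u t * u' t)| :=
        setIntegral_le_integral hint.abs (.of_forall fun t => abs_nonneg _)
    _ = 2 * ∫ t, |u t * u' t| := by simp only [abs_mul, abs_two, integral_const_mul]

theorem sq_le_two_mul_setIntegral_abs_mul_deriv {u u' : ℝ → ℝ} {a b x₀ x : ℝ}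
    (hu : ∀ t, HasDerivAt u (u' t) t) (hu' : Continuous u') (hx₀ : x₀ ∈ Icc a b)
    (hux₀ : u x₀ = 0) (hx : x ∈ Icc a b) :
    u x ^ 2 ≤ 2 * ∫ t in Ioc a b, |u t * u' t| := by
  have hderiv : ∀ t, HasDerivAt (fun s => u s ^ 2) (2 * (u t * u' t)) t := fun t =>
    ((hu t).fun_pow 2).congr_deriv (by ring)
  have hcont : Continuous fun t => 2 * (u t * u' t) :=
    continuous_const.mul ((continuous_iff_continuousAt.2 fun t => (hu t).continuousAt).mul hu')
  have hFTC : ∫ t in x₀..x, 2 * (u t * u' t) = u x ^ 2 := by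
    rw [intervalIntegral.integral_eq_sub_of_hasDerivAt (fun t _ => hderiv t)
      (hcont.intervalIntegrable x₀ x), hux₀]
    ring
  have hsub : uIoc x₀ x ⊆ Ioc a b := Ioc_subset_Ioc (le_min hx₀.1 hx.1) (max_le hx₀.2 hx.2)
  calc u x ^ 2 ≤ ‖∫ t in x₀..x, 2 * (u t * u' t)‖ := by rw [hFTC]; exact le_abs_self _
    _ ≤ ∫ t in uIoc x₀ x, ‖2 * (u t * u' t)‖ :=
        intervalIntegral.norm_integral_le_integral_norm_uIoc
    _ ≤ ∫ t in Ioc a b, ‖2 * (u t * u' t)‖ :=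
        setIntegral_mono_set hcont.norm.integrableOn_Ioc (.of_forall fun t => norm_nonneg _)
          hsub.eventuallyLE
    _ = 2 * ∫ t in Ioc a b, |u t * u' t| := by
        simp only [Real.norm_eq_abs, abs_mul, abs_two, integral_const_mul]

theorem hasDerivAt_d1 {f : ℝ × ℝ → ℝ} (hf : Differentiable ℝ f) (t y : ℝ) :
    HasDerivAt (fun s => f (s, y)) (d1 f (t, y)) t :=
  ((hf _).comp t ((hasDerivAt_id t).prodMk (hasDerivAt_const t y)).differentiableAt).hasDerivAt

theorem hasDerivAt_d2 {f : ℝ × ℝ → ℝ} (hf : Differentiable ℝ f) (x t : ℝ) :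
    HasDerivAt (fun s => f (x, s)) (d2 f (x, t)) t :=
  ((hf _).comp t ((hasDerivAt_const t x).prodMk (hasDerivAt_id t)).differentiableAt).hasDerivAt

theorem d1_eq_fderiv {f : ℝ × ℝ → ℝ} (hf : Differentiable ℝ f) (p : ℝ × ℝ) :
    d1 f p = fderiv ℝ f p (1, 0) :=
  ((hf p).hasFDerivAt.comp_hasDerivAt p.1
    ((hasDerivAt_id p.1).prodMk (hasDerivAt_const p.1 p.2))).deriv

theorem d2_eq_fderiv {f : ℝ × ℝ → ℝ} (hf : Differentiable ℝ f) (p : ℝ × ℝ) :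
    d2 f p = fderiv ℝ f p (0, 1) :=
  ((hf p).hasFDerivAt.comp_hasDerivAt p.2
    ((hasDerivAt_const p.2 p.1).prodMk (hasDerivAt_id p.2))).deriv

theorem ContDiff.continuous_d1 {f : ℝ × ℝ → ℝ} (hf : ContDiff ℝ 1 f) : Continuous (d1 f) := by
  rw [funext (d1_eq_fderiv (hf.differentiable one_ne_zero))]
  exact (hf.continuous_fderiv one_ne_zero).clm_apply continuous_const

theorem ContDiff.continuous_d2 {f : ℝ × ℝ → ℝ} (hf : ContDiff ℝ 1 f) : Continuous (d2 f) := by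
  rw [funext (d2_eq_fderiv (hf.differentiable one_ne_zero))]
  exact (hf.continuous_fderiv one_ne_zero).clm_apply continuous_const

theorem restrict_omegaStrip :
    (volume : Measure (ℝ × ℝ)).restrict OmegaStrip =
      (volume.restrict (Ioc (0:ℝ) 1)).prod volume := by
  rw [OmegaStrip, Measure.volume_eq_prod, ← Measure.prod_restrict, Measure.restrict_univ]

theorem setIntegral_omegaStrip {F : ℝ × ℝ → ℝ} (hF : IntegrableOn F OmegaStrip) :
    ∫ p in OmegaStrip, F p = ∫ y, ∫ x in Ioc (0:ℝ) 1, F (x, y) := by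
  rw [IntegrableOn, restrict_omegaStrip] at hF
  rw [restrict_omegaStrip, integral_prod_symm _ hF]

theorem l2norm_nonneg (f : ℝ × ℝ → ℝ) : 0 ≤ l2norm f :=
  Real.sqrt_nonneg _

theorem SqInt.memLp {f : ℝ × ℝ → ℝ} (hf : SqInt f)
    (hfm : AEStronglyMeasurable f (volume.restrict OmegaStrip)) :
    MemLp f 2 (volume.restrict OmegaStrip) :=
  (memLp_two_iff_integrable_sq hfm).2 hf

theorem SqInt.integrableOn_mul {f g : ℝ × ℝ → ℝ} (hf : SqInt f) (hg : SqInt g)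
    (hfm : AEStronglyMeasurable f (volume.restrict OmegaStrip))
    (hgm : AEStronglyMeasurable g (volume.restrict OmegaStrip)) :
    IntegrableOn (fun p => f p * g p) OmegaStrip :=
  (hf.memLp hfm).integrable_mul (hg.memLp hgm)

theorem integral_abs_mul_le_l2norm_mul_l2norm {f g : ℝ × ℝ → ℝ} (hf : SqInt f) (hg : SqInt g)
    (hfm : AEStronglyMeasurable f (volume.restrict OmegaStrip))
    (hgm : AEStronglyMeasurable g (volume.restrict OmegaStrip)) :
    ∫ p in OmegaStrip, |f p * g p| ≤ l2norm f * l2norm g :=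
  integral_abs_mul_le_sqrt_mul_sqrt (hf.memLp hfm) (hg.memLp hgm)

theorem Continuous.memLp_two_slice {u : ℝ × ℝ → ℝ} (hu : Continuous u) (y : ℝ) :
    MemLp (fun x => u (x, y)) 2 (volume.restrict (Ioc (0:ℝ) 1)) :=
  (memLp_two_iff_integrable_sq (by fun_prop : Continuous fun x => u (x, y)).aestronglyMeasurable).2
    (by fun_prop : Continuous fun x => u (x, y) ^ 2).integrableOn_Ioc

theorem setIntegral_sq_slice_le {f : ℝ × ℝ → ℝ} (hf : ContDiff ℝ 1 f) (hf2 : SqInt f)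
    (hdf2 : SqInt (d2 f)) (y : ℝ) :
    ∫ x in Ioc (0:ℝ) 1, f (x, y) ^ 2 ≤ 2 * ∫ p in OmegaStrip, |f p * d2 f p| := by
  have hfd : Integrable (fun p => f p * d2 f p) ((volume.restrict (Ioc (0:ℝ) 1)).prod volume) := by
    rw [← restrict_omegaStrip]
    exact hf2.integrableOn_mul hdf2 hf.continuous.aestronglyMeasurable
      hf.continuous_d2.aestronglyMeasurable
  have hf2' : Integrable (fun p => f p ^ 2) ((volume.restrict (Ioc (0:ℝ) 1)).prod volume) := by
    rw [← restrict_omegaStrip]; exact hf2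
  have hvertical : ∀ᵐ x ∂(volume.restrict (Ioc (0:ℝ) 1)),
      f (x, y) ^ 2 ≤ 2 * ∫ t, |f (x, t) * d2 f (x, t)| := by
    filter_upwards [hf2'.prod_right_ae, hfd.prod_right_ae] with x hx2 hxd
    exact sq_le_two_mul_integral_abs_mul_deriv (hasDerivAt_d2 (hf.differentiable one_ne_zero) x)
      hx2 hxd y
  have hcont : Continuous fun x => f (x, y) ^ 2 := by fun_prop
  calc ∫ x in Ioc (0:ℝ) 1, f (x, y) ^ 2
      ≤ ∫ x in Ioc (0:ℝ) 1, 2 * ∫ t, |f (x, t) * d2 f (x, t)| :=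
        integral_mono_ae hcont.integrableOn_Ioc (hfd.abs.integral_prod_left.const_mul 2) hvertical
    _ = 2 * ∫ p in OmegaStrip, |f p * d2 f p| := by
        rw [integral_const_mul, restrict_omegaStrip, integral_prod _ hfd.abs]

theorem exists_mem_Icc_eq_zero_of_avgX_eq_zero {h : ℝ × ℝ → ℝ} (hh : Continuous h) {y : ℝ}
    (havg : avgX h y = 0) : ∃ x₀ ∈ Icc (0:ℝ) 1, h (x₀, y) = 0 := by
  obtain ⟨c, hc, hc'⟩ := exists_eq_interval_average zero_ne_one
    (by fun_prop : Continuous fun x => h (x, y)).continuousOn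
  refine ⟨c, uIoo_subset_uIcc_self.trans (by simp) hc, ?_⟩
  rw [hc', interval_average_eq_div]
  exact div_eq_zero_iff.2 (Or.inl havg)

theorem sq_le_of_avgX_eq_zero {h : ℝ × ℝ → ℝ} (hh : ContDiff ℝ 1 h) {y : ℝ}
    (havg : avgX h y = 0) {x : ℝ} (hx : x ∈ Icc (0:ℝ) 1) :
    h (x, y) ^ 2 ≤ 2 * ∫ x' in Ioc (0:ℝ) 1, |h (x', y) * d1 h (x', y)| := by
  obtain ⟨x₀, hx₀, hzero⟩ := exists_mem_Icc_eq_zero_of_avgX_eq_zero hh.continuous havg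
  exact sq_le_two_mul_setIntegral_abs_mul_deriv
    (u := fun s => h (s, y)) (u' := fun s => d1 h (s, y))
    (hasDerivAt_d1 (hh.differentiable one_ne_zero) · y)
    (hh.continuous_d1.comp (by fun_prop)) hx₀ hzero hx

theorem setIntegral_abs_mul_mul_slice_le {f g h : ℝ × ℝ → ℝ} (hf : Continuous f)
    (hg : Continuous g) (hh : ContDiff ℝ 1 h) {y : ℝ} (havg : avgX h y = 0) :
    ∫ x in Ioc (0:ℝ) 1, |f (x, y) * g (x, y) * h (x, y)| ≤
      √(∫ x in Ioc (0:ℝ) 1, f (x, y) ^ 2) * √(∫ x in Ioc (0:ℝ) 1, g (x, y) ^ 2) *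
        √(2 * ∫ x in Ioc (0:ℝ) 1, |h (x, y) * d1 h (x, y)|) := by
  set M := √(2 * ∫ x in Ioc (0:ℝ) 1, |h (x, y) * d1 h (x, y)|)
  have hbound : ∀ x ∈ Ioc (0:ℝ) 1,
      |f (x, y) * g (x, y) * h (x, y)| ≤ |f (x, y) * g (x, y)| * M := fun x hx => by
    rw [abs_mul]
    exact mul_le_mul_of_nonneg_left
      (Real.abs_le_sqrt (sq_le_of_avgX_eq_zero hh havg (Ioc_subset_Icc_self hx))) (abs_nonneg _)
  have hhc := hh.continuous
  calc ∫ x in Ioc (0:ℝ) 1, |f (x, y) * g (x, y) * h (x, y)|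
      ≤ ∫ x in Ioc (0:ℝ) 1, |f (x, y) * g (x, y)| * M :=
        setIntegral_mono_on (by fun_prop : Continuous _).integrableOn_Ioc
          (by fun_prop : Continuous _).integrableOn_Ioc measurableSet_Ioc hbound
    _ = (∫ x in Ioc (0:ℝ) 1, |f (x, y) * g (x, y)|) * M := integral_mul_const _ _
    _ ≤ _ := mul_le_mul_of_nonneg_right (integral_abs_mul_le_sqrt_mul_sqrt
        (hf.memLp_two_slice y) (hg.memLp_two_slice y)) (Real.sqrt_nonneg _)

theorem setIntegral_abs_mul_mul_le {f g h : ℝ × ℝ → ℝ} (hf : ContDiff ℝ 1 f)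
    (hg : Continuous g) (hh : ContDiff ℝ 1 h) (hf2 : SqInt f) (hdf2 : SqInt (d2 f))
    (hg2 : SqInt g) (hh2 : SqInt h) (hdh2 : SqInt (d1 h)) (havg : ∀ y, avgX h y = 0) :
    ∫ p in OmegaStrip, |f p * g p * h p| ≤
      √(2 * ∫ p in OmegaStrip, |f p * d2 f p|) * l2norm g *
        √(2 * ∫ p in OmegaStrip, |h p * d1 h p|) := by
  by_cases hI : IntegrableOn (fun p => |f p * g p * h p|) OmegaStrip
  swap
  · -- the Bochner integral of a non-integrable function is the junk value `0`
    rw [integral_undef hI]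
    have := l2norm_nonneg g
    positivity
  set G : ℝ → ℝ := fun y => ∫ x in Ioc (0:ℝ) 1, g (x, y) ^ 2
  set Φ : ℝ → ℝ := fun y => 2 * ∫ x in Ioc (0:ℝ) 1, |h (x, y) * d1 h (x, y)|
  have hhd : IntegrableOn (fun p => |h p * d1 h p|) OmegaStrip :=
    (hh2.integrableOn_mul hdh2 hh.continuous.aestronglyMeasurable
      hh.continuous_d1.aestronglyMeasurable).abs
  have hGint : Integrable G := by
    rw [SqInt, IntegrableOn, restrict_omegaStrip] at hg2; exact hg2.integral_prod_right
  have hΦint : Integrable Φ := by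
    rw [IntegrableOn, restrict_omegaStrip] at hhd; exact hhd.integral_prod_right.const_mul 2
  have hG0 : 0 ≤ G := fun y => integral_nonneg fun _ => sq_nonneg _
  have hΦ0 : 0 ≤ Φ := fun y => mul_nonneg zero_le_two (integral_nonneg fun _ => abs_nonneg _)
  have hslice : ∀ y, ∫ x in Ioc (0:ℝ) 1, |f (x, y) * g (x, y) * h (x, y)| ≤
      √(2 * ∫ p in OmegaStrip, |f p * d2 f p|) * (√(G y) * √(Φ y)) := fun y => by
    refine (setIntegral_abs_mul_mul_slice_le hf.continuous hg hh (havg y)).trans ?_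
    rw [← mul_assoc]
    gcongr
    exact setIntegral_sq_slice_le hf hf2 hdf2 y
  calc ∫ p in OmegaStrip, |f p * g p * h p|
      = ∫ y, ∫ x in Ioc (0:ℝ) 1, |f (x, y) * g (x, y) * h (x, y)| := setIntegral_omegaStrip hI
    _ ≤ ∫ y, √(2 * ∫ p in OmegaStrip, |f p * d2 f p|) * (√(G y) * √(Φ y)) :=
        integral_mono_of_nonneg (.of_forall fun y => integral_nonneg fun _ => abs_nonneg _)
          (((memLp_two_sqrt hGint hG0).integrable_mul (memLp_two_sqrt hΦint hΦ0)).const_mul _)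
          (.of_forall hslice)
    _ = √(2 * ∫ p in OmegaStrip, |f p * d2 f p|) * ∫ y, √(G y) * √(Φ y) :=
        integral_const_mul _ _
    _ ≤ √(2 * ∫ p in OmegaStrip, |f p * d2 f p|) * (√(∫ y, G y) * √(∫ y, Φ y)) := by
        gcongr; exact integral_sqrt_mul_sqrt_le hGint hΦint hG0 hΦ0
    _ = _ := by
        rw [integral_const_mul, ← setIntegral_omegaStrip hg2, ← setIntegral_omegaStrip hhd,
          ← mul_assoc]
        rfl

/-- Anisotropic trilinear estimate (second form): there is an absolute
constant `C > 0` such that for all `C¹` functions `f, g, h` on `Ω = 𝕋 × ℝ` with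
`f, ∂₂f, g, ∂₂g, h, ∂₁h ∈ L²(Ω)` and `h` of zero horizontal average,
`∫_Ω |fgh| ≤ C ‖f‖_{L²}^{1/2} ‖∂₂f‖_{L²}^{1/2} ‖g‖_{L²} ‖h‖_{L²}^{1/2} ‖∂₁h‖_{L²}^{1/2}`. -/
theorem statement18 :
    ∃ C : ℝ, 0 < C ∧ ∀ f g h : ℝ × ℝ → ℝ,
      ContDiff ℝ 1 f → ContDiff ℝ 1 g → ContDiff ℝ 1 h →
      PeriodicX f → PeriodicX g → PeriodicX h →
      SqInt f → SqInt (d2 f) → SqInt g → SqInt (d2 g) → SqInt h → SqInt (d1 h) →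
      (∀ y : ℝ, avgX h y = 0) →
      (∫ p in OmegaStrip, |f p * g p * h p|) ≤
        C * (Real.sqrt (l2norm f) * Real.sqrt (l2norm (d2 f))) * l2norm g *
          (Real.sqrt (l2norm h) * Real.sqrt (l2norm (d1 h))) := by
  refine ⟨2, two_pos, fun f g h hf hg hh _ _ _ hf2 hdf2 hg2 _ hh2 hdh2 havg => ?_⟩
  have hDf := integral_abs_mul_le_l2norm_mul_l2norm hf2 hdf2 hf.continuous.aestronglyMeasurable
    hf.continuous_d2.aestronglyMeasurable
  have hDh := integral_abs_mul_le_l2norm_mul_l2norm hh2 hdh2 hh.continuous.aestronglyMeasurable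
    hh.continuous_d1.aestronglyMeasurable
  have hg0 := l2norm_nonneg g
  calc (∫ p in OmegaStrip, |f p * g p * h p|)
      ≤ √(2 * ∫ p in OmegaStrip, |f p * d2 f p|) * l2norm g *
          √(2 * ∫ p in OmegaStrip, |h p * d1 h p|) :=
        setIntegral_abs_mul_mul_le hf hg.continuous hh hf2 hdf2 hg2 hh2 hdh2 havg
    _ ≤ √(2 * (l2norm f * l2norm (d2 f))) * l2norm g * √(2 * (l2norm h * l2norm (d1 h))) := by
        gcongr
    _ = _ := by
        rw [Real.sqrt_mul zero_le_two, Real.sqrt_mul zero_le_two, Real.sqrt_mul (l2norm_nonneg f),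
          Real.sqrt_mul (l2norm_nonneg h)]
        linear_combination (√(l2norm f) * √(l2norm (d2 f)) * l2norm g * √(l2norm h) *
          √(l2norm (d1 h))) * Real.mul_self_sqrt zero_le_two

end
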